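/- arXiv:1709.00459 — 3 statements merged into one kernel-verified Lean document; each statement's English description precedes it below -/
import Mathlib

section
/- Let x₁, y₁ ∈ A satisfy x₁·(y² + y) = y₁·(x² + x). Then (x² + x) divides x₁ in A and (y² + y) divides y₁ in A. -/
/-
Since `y² + y = x³ + x + 1` and `2 = 0` in `A`, we have `(x + 1)(x² + x) + (y² + y) = 1`, so
`x² + x` and `y² + y` are coprime; the relation `x₁ (y² + y) = y₁ (x² + x)` then forces each of them
to divide the corresponding coefficient.
-/

noncomputable section

open Polynomial

/-- The defining polynomial `Y² + Y + (X³ + X + 1)` over `𝔽₂[X]`,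
viewed as a polynomial in `Y` with coefficients in `𝔽₂[X]`. -/
def curveEq : Polynomial (Polynomial (ZMod 2)) :=
  X ^ 2 + X + C (X ^ 3 + X + 1)

/-- The ring `A = 𝔽₂[X,Y]/(Y² + Y + X³ + X + 1)`. -/
abbrev A : Type := AdjoinRoot curveEq

/-- The image `x` of `X` in `A`. -/
def aX : A := AdjoinRoot.of curveEq (X : Polynomial (ZMod 2))

/-- The image `y` of `Y` in `A`. -/
def aY : A := AdjoinRoot.root curveEq

theorem IsCoprime.dvd_and_dvd_of_mul_eq_mul {R : Type*} [CommRing R] {u v a b : R}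
    (huv : IsCoprime u v) (h : a * v = b * u) : u ∣ a ∧ v ∣ b :=
  ⟨huv.dvd_of_dvd_mul_right ⟨b, by rw [h, mul_comm]⟩,
    huv.symm.dvd_of_dvd_mul_right ⟨a, by rw [← h, mul_comm]⟩⟩

theorem A_two_eq_zero : (2 : A) = 0 := by
  rw [← map_ofNat (algebraMap (ZMod 2) A) 2]
  exact map_zero _

theorem aY_sq_add_aY_add_aX_cube_add_aX_add_one : aY ^ 2 + aY + (aX ^ 3 + aX + 1) = 0 := by
  have h : AdjoinRoot.mk curveEq (X ^ 2 + X + C (X ^ 3 + X + 1)) = 0 := AdjoinRoot.mk_self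
  simpa [aY, aX, AdjoinRoot.mk_X, AdjoinRoot.mk_C] using h

theorem isCoprime_aX_sq_add_aX_aY_sq_add_aY : IsCoprime (aX ^ 2 + aX) (aY ^ 2 + aY) :=
  ⟨aX + 1, 1, by
    linear_combination aY_sq_add_aY_add_aX_cube_add_aX_add_one + (aX ^ 2 - 1) * A_two_eq_zero⟩

/-- If `x₁·(y² + y) = y₁·(x² + x)` in `A`, then `(x² + x) ∣ x₁` and
`(y² + y) ∣ y₁`. -/
theorem stmt0 (x₁ y₁ : A) (h : x₁ * (aY ^ 2 + aY) = y₁ * (aX ^ 2 + aX)) :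
    (aX ^ 2 + aX) ∣ x₁ ∧ (aY ^ 2 + aY) ∣ y₁ :=
  isCoprime_aX_sq_add_aX_aY_sq_add_aY.dvd_and_dvd_of_mul_eq_mul h

end
end

section
/- Let L := Σ_{i≥0} b_i z^{2^i} ∈ K[[z]]. Then L satisfies the logarithm functional equation of the Drinfeld module: x·L(z) = L(x·z) + L((x² + x)·z²) + L(z⁴), where L(u(z)) denotes substitution of the power series u(z) (which has zero constant term) into L. -/
noncomputable section

open Polynomial

/-- The bracket `[j]_x = x^{2^j} + x ∈ A`. -/
def brX (j : ℕ) : A := aX ^ 2 ^ j + aX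

variable (K : Type) [Field K] [Algebra A K]

/-- The coefficients `b_j = 1/ℓ_j` of the logarithm function:
`b₀ = b₁ = 1` and `b_j = ([1]_x^{2^{j-1}}·b_{j-1} + b_{j-2})/[j]_x` for `j ≥ 2`. -/
def bSeq : ℕ → K
  | 0 => 1
  | 1 => 1
  | (j + 2) =>
      (algebraMap A K (brX 1) ^ 2 ^ (j + 1) * bSeq (j + 1) + bSeq j) /
        algebraMap A K (brX (j + 2))

open scoped Classical in
/-- The logarithm power series `L = Σ_{i≥0} b_i z^{2^i} ∈ K[[z]]`. -/
def logSer : PowerSeries K :=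
  PowerSeries.mk fun n => if ∃ i : ℕ, n = 2 ^ i then bSeq K (Nat.log 2 n) else 0

/-- Substitution of the power series `g` (with zero constant term) into `f`:
the coefficient of `zⁿ` in `f(g(z))` is `Σ_{m=0}^{n} f_m · (gᵐ)_n`. -/
def psComp {R : Type*} [CommRing R] (f g : PowerSeries R) : PowerSeries R :=
  PowerSeries.mk fun n =>
    ∑ m ∈ Finset.range (n + 1), PowerSeries.coeff m f * PowerSeries.coeff n (g ^ m)

/-!
Substituting a monomial `c z^{2^e}` into `L` moves the coefficient `b_i` of `z^{2^i}` to
`z^{2^{i+e}}` with the factor `c^{2^i}`, so both sides are supported on powers of two.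
At `z^{2^{j+2}}` the equation reads
`x b_{j+2} = x^{2^{j+2}} b_{j+2} + [1]_x^{2^{j+1}} b_{j+1} + b_j`, which in characteristic 2
is the defining recurrence `[j+2]_x b_{j+2} = [1]_x^{2^{j+1}} b_{j+1} + b_j`; at `z` and `z²`
it follows from `b₀ = b₁ = 1`.
-/
theorem coeff_psComp_C_mul_X_pow {R : Type*} [CommRing R] (f : PowerSeries R) (c : R) {k : ℕ}
    (hk : 0 < k) (n : ℕ) :
    PowerSeries.coeff n (psComp f (PowerSeries.C c * PowerSeries.X ^ k)) =
      if k ∣ n then PowerSeries.coeff (n / k) f * c ^ (n / k) else 0 := by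
  have hterm (m : ℕ) : PowerSeries.coeff n ((PowerSeries.C c * PowerSeries.X ^ k) ^ m) =
      if n = k * m then c ^ m else 0 := by
    rw [mul_pow, ← map_pow, ← pow_mul, PowerSeries.coeff_C_mul, PowerSeries.coeff_X_pow,
      mul_ite, mul_one, mul_zero]
  simp only [psComp, PowerSeries.coeff_mk, hterm, mul_ite, mul_zero]
  split_ifs with hdvd
  · obtain ⟨q, rfl⟩ := hdvd
    have hq : q ∈ Finset.range (k * q + 1) :=
      Finset.mem_range_succ_iff.mpr (Nat.le_mul_of_pos_left q hk)
    simp only [mul_right_inj' hk.ne', Finset.sum_ite_eq, hq, if_true, Nat.mul_div_cancel_left q hk]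
  · exact Finset.sum_eq_zero fun m _ => if_neg fun h => hdvd ⟨m, h⟩

theorem two_eq_zero_of_algebra {K : Type*} [Semiring K] [Algebra A K] : (2 : K) = 0 := by
  rw [← map_ofNat (algebraMap A K) 2, ← map_ofNat (algebraMap (ZMod 2) A) 2,
    show (2 : ZMod 2) = 0 from rfl, map_zero, map_zero]

theorem curveEq_degree : curveEq.degree = 2 := by
  unfold curveEq
  compute_degree!

theorem brX_ne_zero {j : ℕ} (hj : j ≠ 0) : brX j ≠ 0 := by
  have hpoly : (X ^ 2 ^ j + X : Polynomial (ZMod 2)) ≠ 0 := by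
    rw [← CharTwo.sub_eq_add]
    exact FiniteField.X_pow_card_pow_sub_X_ne_zero (ZMod 2) hj one_lt_two
  have hof : brX j = AdjoinRoot.of curveEq (X ^ 2 ^ j + X) := by
    rw [map_add, map_pow]
    rfl
  rw [hof, ne_eq, map_eq_zero_iff _ (AdjoinRoot.of.injective_of_degree_ne_zero (by
    rw [curveEq_degree]; decide))]
  exact hpoly

theorem brX_mul_bSeq_add_two [IsFractionRing A K] (j : ℕ) :
    algebraMap A K (brX (j + 2)) * bSeq K (j + 2) =
      algebraMap A K (brX 1) ^ 2 ^ (j + 1) * bSeq K (j + 1) + bSeq K j := by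
  rw [bSeq, mul_div_cancel₀]
  exact (map_ne_zero_iff _ (IsFractionRing.injective A K)).mpr (brX_ne_zero (by omega))

theorem coeff_logSer_two_pow (j : ℕ) : PowerSeries.coeff (2 ^ j) (logSer K) = bSeq K j := by
  rw [logSer, PowerSeries.coeff_mk, if_pos ⟨j, rfl⟩, Nat.log_pow one_lt_two]

theorem coeff_logSer_of_forall_ne_two_pow {n : ℕ} (hn : ∀ i, n ≠ 2 ^ i) :
    PowerSeries.coeff n (logSer K) = 0 := by
  rw [logSer, PowerSeries.coeff_mk, if_neg (not_exists.mpr hn)]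

theorem coeff_two_pow_psComp_logSer (c : K) (e i : ℕ) :
    PowerSeries.coeff (2 ^ i) (psComp (logSer K) (PowerSeries.C c * PowerSeries.X ^ 2 ^ e)) =
      if e ≤ i then bSeq K (i - e) * c ^ 2 ^ (i - e) else 0 := by
  simp only [coeff_psComp_C_mul_X_pow _ _ (Nat.two_pow_pos e),
    Nat.pow_dvd_pow_iff_le_right one_lt_two]
  split_ifs with hei
  · rw [Nat.pow_div hei two_pos, coeff_logSer_two_pow]
  · rfl

theorem coeff_psComp_logSer_of_forall_ne_two_pow (c : K) (e : ℕ) {n : ℕ}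
    (hn : ∀ i, n ≠ 2 ^ i) :
    PowerSeries.coeff n (psComp (logSer K) (PowerSeries.C c * PowerSeries.X ^ 2 ^ e)) = 0 := by
  rw [coeff_psComp_C_mul_X_pow _ _ (Nat.two_pow_pos e)]
  split_ifs with hdvd
  · obtain ⟨m, rfl⟩ := hdvd
    rw [Nat.mul_div_cancel_left m (Nat.two_pow_pos e),
      coeff_logSer_of_forall_ne_two_pow K fun i hi => hn (e + i) (by rw [hi, pow_add]), zero_mul]
  · rfl

/-- `L` satisfies the logarithm functional equation of the Drinfeld module:
`x·L(z) = L(x·z) + L((x² + x)·z²) + L(z⁴)`. -/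
theorem stmt5 [IsFractionRing A K] :
    PowerSeries.C (algebraMap A K aX) * logSer K =
      psComp (logSer K) (PowerSeries.C (algebraMap A K aX) * PowerSeries.X) +
        psComp (logSer K)
          (PowerSeries.C (algebraMap A K (aX ^ 2 + aX)) * PowerSeries.X ^ 2) +
          psComp (logSer K) (PowerSeries.X ^ 4) := by
  set a := algebraMap A K aX
  have hbrX (j : ℕ) : algebraMap A K (brX j) = a ^ 2 ^ j + a := by
    rw [brX, map_add, map_pow]
  have hX₁ : PowerSeries.C a * PowerSeries.X = PowerSeries.C a * PowerSeries.X ^ 2 ^ 0 := by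
    rw [pow_zero, pow_one]
  have hX₂ : PowerSeries.C (algebraMap A K (aX ^ 2 + aX)) * PowerSeries.X ^ 2 =
      PowerSeries.C (a ^ 2 + a) * PowerSeries.X ^ 2 ^ 1 := by
    rw [map_add, map_pow, pow_one]
  have hX₄ : (PowerSeries.X ^ 4 : PowerSeries K) = PowerSeries.C 1 * PowerSeries.X ^ 2 ^ 2 := by
    rw [map_one, one_mul]; norm_num
  rw [hX₁, hX₂, hX₄]
  ext n
  rw [PowerSeries.coeff_C_mul, map_add, map_add]
  by_cases hn : ∃ i, n = 2 ^ i
  · obtain ⟨i, rfl⟩ := hn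
    have h2 : (2 : K) = 0 := two_eq_zero_of_algebra
    simp only [coeff_logSer_two_pow, coeff_two_pow_psComp_logSer]
    rcases i with _ | _ | j
    · simp [bSeq]
    · simp only [bSeq, mul_one, zero_add, zero_le, ↓reduceIte, tsub_zero, pow_one, one_mul,
        Std.le_refl, tsub_self, pow_zero, Nat.not_ofNat_le_one, add_zero]
      linear_combination -a ^ 2 * h2
    · have hrec := brX_mul_bSeq_add_two K j
      rw [hbrX, hbrX] at hrec
      simp only [le_add_iff_nonneg_left, zero_le, ↓reduceIte, tsub_zero, add_tsub_cancel_right,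
        Nat.reduceSubDiff, one_pow, mul_one]
      linear_combination hrec - a ^ 2 ^ (j + 2) * bSeq K (j + 2) * h2
  · push Not at hn
    simp only [coeff_logSer_of_forall_ne_two_pow K hn,
      coeff_psComp_logSer_of_forall_ne_two_pow K _ _ hn, mul_zero, add_zero]
end
end

section
/- Let d ≥ 0 and let f(w) = Σ_{k=0}^{d} c_k·w^{2^k} ∈ K[w] be an additive polynomial commuting under composition with ρ_x(w) = x·w + (x² + x)·w² + w⁴, i.e. f(ρ_x(w)) = ρ_x(f(w)) in K[w]. Then (if d ≥ 1) c₁ = c₀² + c₀, and for all 2 ≤ k ≤ d: [k]_x·c_k = [1]_x^{2^{k-1}}·c_{k-1} + c_{k-2} + [1]_x·c_{k-1}² + c_{k-2}⁴. -/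
noncomputable section

open Polynomial

lemma coeff_shift_sum {K : Type} [Semiring K] (d m j : ℕ) (a : ℕ → K) :
    (∑ k ∈ Finset.range (d + 1), C (a k) * X ^ 2 ^ (k + j)).coeff (2 ^ m) =
      if j ≤ m ∧ m - j ≤ d then a (m - j) else 0 := by
  rw [finset_sum_coeff]
  have key : ∀ k : ℕ, (C (a k) * X ^ 2 ^ (k + j) : K[X]).coeff (2 ^ m)
      = if k = m - j ∧ j ≤ m then a k else 0 := by
    intro k
    rw [coeff_C_mul_X_pow]
    congr 1
    rw [eq_iff_iff]
    constructor
    · intro h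
      have := Nat.pow_right_injective (le_refl 2) h
      omega
    · rintro ⟨rfl, h⟩
      congr 1
      omega
  simp only [key]
  by_cases hjm : j ≤ m
  · simp only [hjm, and_true]
    rw [Finset.sum_ite_eq' (Finset.range (d + 1)) (m - j) a]
    simp [Nat.lt_succ_iff]
  · simp [hjm]

lemma curveEq_natDegree : curveEq.natDegree = 2 := by
  unfold curveEq
  compute_degree!

lemma aX_sq_add_aX_ne_zero : (aX ^ 2 + aX : A) ≠ 0 := by
  have hmk : (aX ^ 2 + aX : A)
      = AdjoinRoot.mk curveEq (C (X ^ 2 + X : Polynomial (ZMod 2))) := by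
    have h1 : (C (X ^ 2 + X : Polynomial (ZMod 2)) : Polynomial (Polynomial (ZMod 2)))
        = (C X) ^ 2 + C X := by
      rw [map_add, map_pow]
    rw [h1, map_add, map_pow]
    rfl
  rw [hmk, Ne, AdjoinRoot.mk_eq_zero]
  intro hdvd
  have hX2 : (X ^ 2 + X : Polynomial (ZMod 2)) ≠ 0 := by
    intro h
    have := congrArg (fun p => Polynomial.coeff p 2) h
    simp [coeff_X, coeff_X_pow] at this
  have h1 : (C (X ^ 2 + X : Polynomial (ZMod 2)) : Polynomial (Polynomial (ZMod 2))) ≠ 0 :=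
    C_ne_zero.mpr hX2
  have h2 := Polynomial.natDegree_le_of_dvd hdvd h1
  rw [natDegree_C, curveEq_natDegree] at h2
  omega

/-- If the additive polynomial `f(w) = Σ_{k=0}^{d} c_k·w^{2^k} ∈ K[w]` commutes
under composition with `ρ_x(w) = x·w + (x² + x)·w² + w⁴`, then (if `d ≥ 1`)
`c₁ = c₀² + c₀`, and for all `2 ≤ k ≤ d`:
`[k]_x·c_k = [1]_x^{2^{k-1}}·c_{k-1} + c_{k-2} + [1]_x·c_{k-1}² + c_{k-2}⁴`. -/
theorem stmt6 (K : Type) [Field K] [Algebra A K] [IsFractionRing A K]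
    (d : ℕ) (c : ℕ → K)
    (f : Polynomial K)
    (hf : f = ∑ k ∈ Finset.range (d + 1), C (c k) * X ^ 2 ^ k)
    (rhoX : Polynomial K)
    (hrho : rhoX = C (algebraMap A K aX) * X +
      C (algebraMap A K (aX ^ 2 + aX)) * X ^ 2 + X ^ 4)
    (hcomm : f.comp rhoX = rhoX.comp f) :
    (1 ≤ d → c 1 = (c 0) ^ 2 + c 0) ∧
    (∀ k : ℕ, 2 ≤ k → k ≤ d →
      algebraMap A K (brX k) * c k =
        algebraMap A K (brX 1) ^ 2 ^ (k - 1) * c (k - 1) + c (k - 2) +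
          algebraMap A K (brX 1) * (c (k - 1)) ^ 2 + (c (k - 2)) ^ 4) := by
  -- characteristic 2
  have htwoA : (2 : A) = 0 := by
    have h2 : (2 : Polynomial (ZMod 2)) = 0 := by
      have h0 : (2 : ZMod 2) = 0 := rfl
      calc (2 : Polynomial (ZMod 2)) = C 2 := (map_ofNat C 2).symm
        _ = 0 := by rw [h0, map_zero]
    calc (2 : A) = algebraMap (Polynomial (ZMod 2)) A 2 := by rw [map_ofNat]
      _ = 0 := by rw [h2, map_zero]
  have htwo : (2 : K) = 0 := by
    calc (2 : K) = algebraMap A K 2 := by rw [map_ofNat]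
      _ = 0 := by rw [htwoA, map_zero]
  haveI : CharP K 2 := (CharP.charP_iff_prime_eq_zero Nat.prime_two).2 htwo
  set xK : K := algebraMap A K aX with hxK
  set sK : K := xK ^ 2 + xK with hsK
  have hs_ne : sK ≠ 0 := by
    have h := fun h => aX_sq_add_aX_ne_zero ((map_eq_zero_iff (algebraMap A K)
      (IsFractionRing.injective A K)).1 h)
    rw [hsK]
    simpa [map_add, map_pow] using h
  have hrho' : rhoX = C xK * X + C sK * X ^ 2 + X ^ 4 := by
    rw [hrho, map_add, map_pow]
  -- Frobenius powers of rhoX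
  have hpow : ∀ k : ℕ, rhoX ^ 2 ^ k
      = C (xK ^ 2 ^ k) * X ^ 2 ^ (k + 0) + C (sK ^ 2 ^ k) * X ^ 2 ^ (k + 1)
        + C (1 : K) * X ^ 2 ^ (k + 2) := by
    intro k
    rw [hrho', add_pow_char_pow, add_pow_char_pow, mul_pow, mul_pow, ← C_pow, ← C_pow,
      ← pow_mul, ← pow_mul, show 2 * 2 ^ k = 2 ^ (k + 1) from by ring,
      show 4 * 2 ^ k = 2 ^ (k + 2) from by ring, C_1, one_mul]
    norm_num
  -- LHS expanded
  have hL : f.comp rhoX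
      = (∑ k ∈ Finset.range (d + 1), C (c k * xK ^ 2 ^ k) * X ^ 2 ^ (k + 0))
        + (∑ k ∈ Finset.range (d + 1), C (c k * sK ^ 2 ^ k) * X ^ 2 ^ (k + 1))
        + (∑ k ∈ Finset.range (d + 1), C (c k) * X ^ 2 ^ (k + 2)) := by
    rw [hf, Polynomial.sum_comp, ← Finset.sum_add_distrib, ← Finset.sum_add_distrib]
    refine Finset.sum_congr rfl fun k _ => ?_
    rw [mul_comp, C_comp, X_pow_comp, hpow k]
    simp only [mul_add, ← mul_assoc, ← C_mul, mul_one]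
  -- RHS expanded
  have hf2 : f ^ 2 = ∑ k ∈ Finset.range (d + 1), C (c k ^ 2) * X ^ 2 ^ (k + 1) := by
    rw [hf, sum_pow_char]
    refine Finset.sum_congr rfl fun k _ => ?_
    rw [mul_pow, ← C_pow, ← pow_mul, show (2:ℕ) ^ k * 2 = 2 ^ (k + 1) from by ring]
  have hf4 : f ^ 4 = ∑ k ∈ Finset.range (d + 1), C (c k ^ 4) * X ^ 2 ^ (k + 2) := by
    have h4 : f ^ 4 = (f ^ 2) ^ 2 := by ring
    rw [h4, hf2, sum_pow_char]
    refine Finset.sum_congr rfl fun k _ => ?_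
    rw [mul_pow, ← C_pow, ← pow_mul, show (2:ℕ) * 2 = 4 from by norm_num, ← pow_mul,
      show (2:ℕ) ^ (k + 1) * 2 = 2 ^ (k + 2) from by ring]
  have hR : rhoX.comp f
      = (∑ k ∈ Finset.range (d + 1), C (xK * c k) * X ^ 2 ^ (k + 0))
        + (∑ k ∈ Finset.range (d + 1), C (sK * c k ^ 2) * X ^ 2 ^ (k + 1))
        + (∑ k ∈ Finset.range (d + 1), C (c k ^ 4) * X ^ 2 ^ (k + 2)) := by
    rw [hrho', add_comp, add_comp, mul_comp, mul_comp, C_comp, C_comp, X_comp, X_pow_comp,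
      X_pow_comp, hf2, hf4]
    congr 1
    congr 1
    · rw [hf, Finset.mul_sum]
      refine Finset.sum_congr rfl fun k _ => ?_
      rw [← mul_assoc, ← C_mul, Nat.add_zero]
    · rw [Finset.mul_sum]
      refine Finset.sum_congr rfl fun k _ => ?_
      rw [← mul_assoc, ← C_mul]
  -- coefficient equations
  have hmain : ∀ m : ℕ,
      ((if 0 ≤ m ∧ m - 0 ≤ d then c (m - 0) * xK ^ 2 ^ (m - 0) else 0)
        + (if 1 ≤ m ∧ m - 1 ≤ d then c (m - 1) * sK ^ 2 ^ (m - 1) else 0)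
        + (if 2 ≤ m ∧ m - 2 ≤ d then c (m - 2) else 0))
      = ((if 0 ≤ m ∧ m - 0 ≤ d then xK * c (m - 0) else 0)
        + (if 1 ≤ m ∧ m - 1 ≤ d then sK * c (m - 1) ^ 2 else 0)
        + (if 2 ≤ m ∧ m - 2 ≤ d then c (m - 2) ^ 4 else 0)) := by
    intro m
    have h := congrArg (fun p : K[X] => p.coeff (2 ^ m)) hcomm
    rw [hL, hR] at h
    simpa only [coeff_add, coeff_shift_sum] using h
  constructor
  · intro hd
    have e := hmain 1
    have h1 : 0 ≤ 1 ∧ 1 - 0 ≤ d := ⟨Nat.zero_le _, by omega⟩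
    have h2 : 1 ≤ 1 ∧ 1 - 1 ≤ d := ⟨le_refl _, by omega⟩
    have h3 : ¬ (2 ≤ 1 ∧ 1 - 2 ≤ d) := by omega
    rw [if_pos h1, if_pos h2, if_neg h3, if_pos h1, if_pos h2, if_neg h3] at e
    norm_num at e
    have key : sK * c 1 = sK * (c 0 ^ 2 + c 0) := by
      rw [hsK]
      rw [hsK] at e
      linear_combination e + (xK * c 1 - (xK ^ 2 + xK) * c 0) * htwo
    exact mul_left_cancel₀ hs_ne key
  · intro k hk2 hkd
    have e := hmain k
    have h1 : 0 ≤ k ∧ k - 0 ≤ d := ⟨Nat.zero_le _, by omega⟩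
    have h2 : 1 ≤ k ∧ k - 1 ≤ d := ⟨by omega, by omega⟩
    have h3 : 2 ≤ k ∧ k - 2 ≤ d := ⟨hk2, by omega⟩
    rw [if_pos h1, if_pos h2, if_pos h3, if_pos h1, if_pos h2, if_pos h3] at e
    simp only [Nat.sub_zero] at e
    have hb1 : algebraMap A K (brX 1) = sK := by
      rw [brX, map_add, map_pow, hsK, hxK]
      norm_num
    have hbk : algebraMap A K (brX k) = xK ^ 2 ^ k + xK := by
      rw [brX, map_add, map_pow, hxK]
    rw [hb1, hbk, hsK]
    rw [hsK] at e
    linear_combination e + (xK * c k - (xK ^ 2 + xK) ^ 2 ^ (k - 1) * c (k - 1) - c (k - 2)) * htwo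
end
end
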